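/- (Simultaneous decycling bound) Let G be a Garside group and a ∈ G with left normal form a = Δ^p s₁ ⋯ s_l, where l ≥ 1, and set q := p + l = sup a. Let X ∈ G⁺. If sup(X a X⁻¹) ≤ q − 1, then X ≽ s_l. -/

import Mathlib

/-- A Garside structure on a group `G`: a submonoid `G⁺` of positive elements
together with a Garside element `Δ`, satisfying the Garside axioms. -/
structure GarsideStructure (G : Type*) [Group G] where
  /-- the monoid `G⁺` of positive elements -/
  pos : Submonoid G
  /-- the Garside element `Δ` -/
  Δ : G
  delta_mem : Δ ∈ pos
  /-- `G⁺` is Noetherian -/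
  noetherian : ∀ a ∈ pos, ∃ n : ℕ, ∀ l : List G,
    (∀ x ∈ l, x ∈ pos ∧ x ≠ 1) → l.prod = a → l.length ≤ n
  /-- any two elements of `G⁺` admit a least common right multiple (w.r.t. `≼`) -/
  lcm_right : ∀ a ∈ pos, ∀ b ∈ pos, ∃ m ∈ pos,
    a⁻¹ * m ∈ pos ∧ b⁻¹ * m ∈ pos ∧
      ∀ c ∈ pos, a⁻¹ * c ∈ pos → b⁻¹ * c ∈ pos → m⁻¹ * c ∈ pos
  /-- any two elements of `G⁺` admit a least common left multiple (w.r.t. `≽`) -/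
  lcm_left : ∀ a ∈ pos, ∀ b ∈ pos, ∃ m ∈ pos,
    m * a⁻¹ ∈ pos ∧ m * b⁻¹ ∈ pos ∧
      ∀ c ∈ pos, c * a⁻¹ ∈ pos → c * b⁻¹ ∈ pos → c * m⁻¹ ∈ pos
  /-- `G` is the group of fractions of `G⁺` -/
  fractions : ∀ g : G, ∃ a ∈ pos, ∃ b ∈ pos, g = a⁻¹ * b
  /-- `Δ` is balanced: its left divisors in `G⁺` coincide with its right divisors -/
  balanced : ∀ s ∈ pos, (s⁻¹ * Δ ∈ pos ↔ Δ * s⁻¹ ∈ pos)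
  /-- the set of simple elements (divisors of `Δ`) is finite -/
  simples_finite : {s : G | s ∈ pos ∧ s⁻¹ * Δ ∈ pos}.Finite
  /-- the simple elements generate `G⁺` -/
  simples_generate : Submonoid.closure {s : G | s ∈ pos ∧ s⁻¹ * Δ ∈ pos} = pos

namespace GarsideStructure

variable {G : Type*} [Group G]

/-- `a ≼ b` : left divisibility. -/
def LeftDvd (Γ : GarsideStructure G) (a b : G) : Prop := a⁻¹ * b ∈ Γ.pos

/-- `b ≽ a` : right divisibility. -/
def RightDvd (Γ : GarsideStructure G) (b a : G) : Prop := b * a⁻¹ ∈ Γ.pos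

/-- a simple element: a divisor of `Δ`. -/
def Simple (Γ : GarsideStructure G) (s : G) : Prop := s ∈ Γ.pos ∧ Γ.LeftDvd s Γ.Δ

/-- an atom of `G⁺`. -/
def Atom (Γ : GarsideStructure G) (a : G) : Prop :=
  a ∈ Γ.pos ∧ a ≠ 1 ∧ ∀ b ∈ Γ.pos, ∀ c ∈ Γ.pos, a = b * c → b = 1 ∨ c = 1

/-- the iterated automorphism `τ^k`, where `τ(x) = Δ⁻¹xΔ`; so `τ^k(x) = Δ^(-k) x Δ^k`. -/
def tau (Γ : GarsideStructure G) (k : ℤ) (x : G) : G := Γ.Δ ^ (-k) * x * Γ.Δ ^ k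

/-- `d` is the greatest common left divisor (`∧`) of `a` and `b`. -/
def IsLeftGcd (Γ : GarsideStructure G) (d a b : G) : Prop :=
  d ∈ Γ.pos ∧ Γ.LeftDvd d a ∧ Γ.LeftDvd d b ∧
    ∀ c ∈ Γ.pos, Γ.LeftDvd c a → Γ.LeftDvd c b → Γ.LeftDvd c d

/-- `d` is the greatest common right divisor (`⋀̃`) of `a` and `b`. -/
def IsRightGcd (Γ : GarsideStructure G) (d a b : G) : Prop :=
  d ∈ Γ.pos ∧ Γ.RightDvd a d ∧ Γ.RightDvd b d ∧
    ∀ c ∈ Γ.pos, Γ.RightDvd a c → Γ.RightDvd b c → Γ.RightDvd d c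

/-- membership of a tuple `a ∈ Gʳ` in the interval `[p,q]`:
`pᵢ ≤ inf aᵢ` (i.e. `Δ^pᵢ ≼ aᵢ`) and `sup aᵢ ≤ qᵢ` (i.e. `aᵢ ≼ Δ^qᵢ`) for all `i`. -/
def InInterval (Γ : GarsideStructure G) {r : ℕ} (p q : Fin r → ℤ) (a : Fin r → G) : Prop :=
  ∀ i, Γ.LeftDvd (Γ.Δ ^ (p i)) (a i) ∧ Γ.LeftDvd (a i) (Γ.Δ ^ (q i))

/-- `‖a‖`: the maximal number of atoms in an expression of `a` as a product of atoms. -/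
noncomputable def anorm (Γ : GarsideStructure G) (a : G) : ℕ :=
  sSup {n | ∃ l : List G, (∀ x ∈ l, Γ.Atom x) ∧ l.prod = a ∧ l.length = n}

/-!
Write `a = Δ^p w` with `w = s₁ ⋯ s_l`. Since `X` is positive, the bound on `sup (X a X⁻¹)` yields
`P ∈ G⁺` with `P w = Δ^(l-1) X`. Left-weightedness of `s₁ ⋯ s_l` then turns `Δ^(l-1) ≼ P s₁ ⋯ s_l`
into `Δ^(l-1) ≼ P s₁ ⋯ s_(l-1)`, one factor of `Δ` at a time: `Δ ≼ x y` forces `Δ ≼ x (Δ ∧ y)`,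
because the lcm `x ∨ Δ` also divides `x Δ`, `G⁺` being stable under `τ`. So
`Δ^(l-1) ≼ Δ^(l-1) X s_l⁻¹`, that is, `X s_l⁻¹ ∈ G⁺`.
-/

variable {Γ : GarsideStructure G}

def IsLeftWeighted (Γ : GarsideStructure G) (L : List G) : Prop :=
  ∀ (i : ℕ) (hi : i < L.length), Γ.IsLeftGcd L[i] Γ.Δ (L.drop i).prod

lemma IsLeftWeighted.head {t : G} {L : List G} (h : Γ.IsLeftWeighted (t :: L)) :
    Γ.IsLeftGcd t Γ.Δ (t :: L).prod :=
  h 0 (by simp)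

lemma IsLeftWeighted.tail {t : G} {L : List G} (h : Γ.IsLeftWeighted (t :: L)) :
    Γ.IsLeftWeighted L := fun i hi =>
  h (i + 1) (by simpa using hi)

lemma LeftDvd.trans {a b c : G} (hab : Γ.LeftDvd a b) (hbc : Γ.LeftDvd b c) :
    Γ.LeftDvd a c := by
  simpa [LeftDvd, mul_assoc] using Γ.pos.mul_mem hab hbc

lemma leftDvd_mul_right_iff {a b : G} : Γ.LeftDvd a (a * b) ↔ b ∈ Γ.pos := by
  simp [LeftDvd]

lemma mul_leftDvd_mul_left_iff (c : G) {a b : G} :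
    Γ.LeftDvd (c * a) (c * b) ↔ Γ.LeftDvd a b := by
  simp [LeftDvd, mul_assoc]

lemma map_mem_of_forall_simple (f : G →* G) (hf : ∀ s, Γ.Simple s → f s ∈ Γ.pos) {x : G}
    (hx : x ∈ Γ.pos) : f x ∈ Γ.pos := by
  rw [← Γ.simples_generate] at hx
  exact (Submonoid.closure_le (S := Γ.pos.comap f)).2 hf hx

lemma tau_add (j k : ℤ) (x : G) : Γ.tau (j + k) x = Γ.tau k (Γ.tau j x) := by
  simp only [tau, neg_add, zpow_add]
  group

lemma tau_one_mem {x : G} (hx : x ∈ Γ.pos) : Γ.tau 1 x ∈ Γ.pos := by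
  have := map_mem_of_forall_simple (MulAut.conj Γ.Δ⁻¹).toMonoidHom ?_ hx
  · simpa [tau] using this
  rintro s ⟨hs, hsΔ⟩
  -- `s⁻¹ Δ` right-divides `Δ`, hence left-divides it by balancedness.
  have h := (Γ.balanced _ hsΔ).2 (by simpa using hs)
  simpa [mul_assoc] using h

lemma tau_neg_one_mem {x : G} (hx : x ∈ Γ.pos) : Γ.tau (-1) x ∈ Γ.pos := by
  have := map_mem_of_forall_simple (MulAut.conj Γ.Δ).toMonoidHom ?_ hx
  · simpa [tau] using this
  rintro s ⟨hs, hsΔ⟩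
  have hΔs := (Γ.balanced s hs).1 hsΔ
  -- `Δ s⁻¹` left-divides `Δ`, hence right-divides it by balancedness.
  have h := (Γ.balanced _ hΔs).1 (by simpa using hs)
  simpa [mul_assoc] using h

lemma tau_mem (k : ℤ) {x : G} (hx : x ∈ Γ.pos) : Γ.tau k x ∈ Γ.pos := by
  induction k using Int.induction_on with
  | zero => simpa [tau] using hx
  | succ k ih => rw [tau_add]; exact tau_one_mem ih
  | pred k ih => rw [sub_eq_add_neg, tau_add]; exact tau_neg_one_mem ih

lemma delta_leftDvd_mul_delta {x : G} (hx : x ∈ Γ.pos) : Γ.LeftDvd Γ.Δ (x * Γ.Δ) := by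
  simpa [LeftDvd, tau, mul_assoc] using tau_mem 1 hx

lemma leftDvd_delta_zpow_iff {g : G} {n : ℤ} :
    Γ.LeftDvd g (Γ.Δ ^ n) ↔ Γ.RightDvd (Γ.Δ ^ n) g := by
  constructor <;> intro h
  · simpa [LeftDvd, RightDvd, tau, mul_assoc] using tau_mem (-n) h
  · simpa [LeftDvd, RightDvd, tau, mul_assoc] using tau_mem n h

lemma leftDvd_delta_zpow_of_mul {x y : G} {n : ℤ} (hx : x ∈ Γ.pos)
    (h : Γ.LeftDvd (x * y) (Γ.Δ ^ n)) : Γ.LeftDvd y (Γ.Δ ^ n) := by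
  have := Γ.pos.mul_mem h (tau_mem n hx)
  simpa [LeftDvd, tau, mul_assoc] using this

lemma delta_leftDvd_mul_of_isLeftGcd {x y d : G} (hx : x ∈ Γ.pos) (hd : Γ.IsLeftGcd d Γ.Δ y)
    (h : Γ.LeftDvd Γ.Δ (x * y)) : Γ.LeftDvd Γ.Δ (x * d) := by
  obtain ⟨hd_pos, -, hdy, hd_max⟩ := hd
  have hy : y ∈ Γ.pos := by simpa using Γ.pos.mul_mem hd_pos hdy
  obtain ⟨e, -, hxe, hΔe, he_min⟩ := Γ.lcm_right x hx Γ.Δ Γ.delta_mem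
  have hexy : Γ.LeftDvd e (x * y) :=
    he_min _ (Γ.pos.mul_mem hx hy) (leftDvd_mul_right_iff.2 hy) h
  have hexΔ : Γ.LeftDvd e (x * Γ.Δ) :=
    he_min _ (Γ.pos.mul_mem hx Γ.delta_mem) (leftDvd_mul_right_iff.2 Γ.delta_mem)
      (delta_leftDvd_mul_delta hx)
  have hxe_d : Γ.LeftDvd (x⁻¹ * e) d := by
    refine hd_max _ hxe ?_ ?_ <;> rwa [← mul_leftDvd_mul_left_iff x, mul_inv_cancel_left]
  rw [← mul_leftDvd_mul_left_iff x, mul_inv_cancel_left] at hxe_d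
  exact LeftDvd.trans hΔe hxe_d

lemma delta_pow_leftDvd_mul_take {L : List G} (hL : Γ.IsLeftWeighted L) {P : G}
    (hP : P ∈ Γ.pos) {n : ℕ} (h : Γ.LeftDvd (Γ.Δ ^ n) (P * L.prod)) :
    Γ.LeftDvd (Γ.Δ ^ n) (P * (L.take n).prod) := by
  induction L generalizing P n with
  | nil => simpa using h
  | cons t L ih =>
    cases n with
    | zero => simpa [LeftDvd] using hP
    | succ n =>
      have hΔ : Γ.LeftDvd Γ.Δ (P * (t :: L).prod) :=
        LeftDvd.trans (leftDvd_mul_right_iff.2 (pow_mem Γ.delta_mem n)) (by rwa [← pow_succ'])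
      have hPt : Γ.LeftDvd Γ.Δ (P * t) := delta_leftDvd_mul_of_isLeftGcd hP hL.head hΔ
      have hPt_eq : P * t = Γ.Δ * (Γ.Δ⁻¹ * (P * t)) := by group
      have hrest : Γ.LeftDvd (Γ.Δ ^ n) (Γ.Δ⁻¹ * (P * t) * L.prod) := by
        rwa [← mul_leftDvd_mul_left_iff Γ.Δ, ← pow_succ', ← mul_assoc, ← hPt_eq, mul_assoc,
          ← List.prod_cons]
      have := ih hL.tail hPt hrest
      rwa [List.take_succ_cons, List.prod_cons, ← mul_assoc, hPt_eq, mul_assoc, pow_succ',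
        mul_leftDvd_mul_left_iff]

end GarsideStructure

/-- Simultaneous decycling bound: if `a` has left normal form `a = Δᵖ s₁ ⋯ s_l`
with `l ≥ 1` and `q := p + l = sup a`, and `X ∈ G⁺` satisfies `sup(X a X⁻¹) ≤ q − 1`
(i.e. `X a X⁻¹ ≼ Δ^(q−1)`), then `X ≽ s_l`. -/
theorem simultaneous_decycling_bound {G : Type*} [Group G] (Γ : GarsideStructure G)
    (a : G) (l : ℕ) (hl : 1 ≤ l) (p : ℤ) (s : Fin l → G)
    (hnf : a = Γ.Δ ^ p * (List.ofFn s).prod)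
    (hgcd : ∀ i : Fin l, Γ.IsLeftGcd (s i) Γ.Δ (((List.ofFn s).drop i.val).prod)
    )
    (X : G) (hX : X ∈ Γ.pos)
    (hsup : Γ.LeftDvd (X * a * X⁻¹) (Γ.Δ ^ (p + (l : ℤ) - 1))) :
    Γ.RightDvd X (s ⟨l - 1, by omega⟩) := by
  open GarsideStructure in
  set w := (List.ofFn s).prod
  have hw : Γ.IsLeftWeighted (List.ofFn s) := fun i hi => by
    simpa using hgcd ⟨i, by simpa using hi⟩
  have haX : Γ.LeftDvd (a * X⁻¹) (Γ.Δ ^ (p + (l : ℤ) - 1)) :=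
    leftDvd_delta_zpow_of_mul hX (by rwa [← mul_assoc])
  have hwX : Γ.LeftDvd (w * X⁻¹) (Γ.Δ ^ ((l - 1 : ℕ) : ℤ)) := by
    rwa [hnf, mul_assoc, show p + (l : ℤ) - 1 = p + (l - 1 : ℕ) by omega, zpow_add,
      mul_leftDvd_mul_left_iff] at haX
  have hP : Γ.Δ ^ (l - 1) * X * w⁻¹ ∈ Γ.pos := by
    simpa [GarsideStructure.RightDvd, mul_assoc] using leftDvd_delta_zpow_iff.1 hwX
  have hPw : Γ.LeftDvd (Γ.Δ ^ (l - 1)) (Γ.Δ ^ (l - 1) * X * w⁻¹ * w) := by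
    simpa [LeftDvd] using hX
  have hw_split : w = ((List.ofFn s).take (l - 1)).prod * s ⟨l - 1, by omega⟩ := by
    have h := List.prod_take_succ (List.ofFn s) (l - 1) (by rw [List.length_ofFn]; omega)
    rw [Nat.sub_add_cancel hl, List.take_of_length_le (by simp)] at h
    simpa using h
  have := delta_pow_leftDvd_mul_take hw hP hPw
  rwa [hw_split, mul_inv_rev, mul_assoc, mul_assoc, inv_mul_cancel_right,
    leftDvd_mul_right_iff] at this
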